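/- arXiv:1908.04183 — 5 statements merged into one kernel-verified Lean document; each statement's English description precedes it below -/
import Mathlib

section
/- For every C ≥ 0, C_g ≥ 0 and T > 0, there exists a constant R > 0, depending only on C, C_g and T (and in particular independent of N and d), with the following property: for any integer N ≥ 1 and any Lipschitz curves r₁, …, r_N : [0,T] → ℝ^d satisfying, for almost every t ∈ [0,T], r_i'(t) = −A_i(t)ᵀ r_i(t) − (1/N) ∑_{j=1}^N B_{ij}(t)ᵀ r_j(t) + c_i(t), where the matrices A_i(t), B_{ij}(t) ∈ ℝ^{d×d} have operator norm at most C, the vectors c_i(t) ∈ ℝ^d satisfy |c_i(t)| ≤ C, and the terminal data satisfy |r_i(T)| ≤ C_g for every i, it holds that |r_i(t)| ≤ R for every i ∈ {1,…,N} and all t ∈ [0,T]. -/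
/-!
Write `u t` for the average of the `‖r i t‖`. Integrating the adjoint equation backwards from `T`,
each `‖r i t‖` is bounded by `C_g + ∫ₜᵀ (C ‖r i‖ + C u + C)`. Averaging over `i` closes the
inequality on `u` alone, `u t ≤ C_g + ∫ₜᵀ (2 C u + C)`, so Grönwall bounds `u` independently of
`N`. Feeding that bound back into the inequality for a single `‖r i t‖` and applying Grönwall once
more gives the uniform bound.
-/

open MeasureTheory Set
open scoped BigOperators

/-- Testing against a norming functional reduces this to the fundamental theorem of calculus for
real absolutely continuous functions. -/
theorem LipschitzOnWith.norm_sub_le_integral_of_norm_deriv_le {E : Type*} [NormedAddCommGroup E]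
    [NormedSpace ℝ E] {f v : ℝ → E} {g : ℝ → ℝ} {a b : ℝ} {L : NNReal} (hab : a ≤ b)
    (hf : LipschitzOnWith L f (Icc a b))
    (hv : ∀ᵐ s ∂volume.restrict (Icc a b), HasDerivAt f (v s) s ∧ ‖v s‖ ≤ g s)
    (hg : IntervalIntegrable g volume a b) :
    ‖f b - f a‖ ≤ ∫ s in a..b, g s := by
  obtain ⟨ℓ, hℓ, hℓf⟩ := exists_dual_vector'' ℝ (f b - f a)
  have hac : AbsolutelyContinuousOnInterval (ℓ ∘ f) a b := by
    rw [← uIcc_of_le hab] at hf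
    exact (ℓ.lipschitz.lipschitzOnWith.comp hf (mapsTo_univ _ _)).absolutelyContinuousOnInterval
  have hderiv : deriv (ℓ ∘ f) ≤ᵐ[volume.restrict (Icc a b)] g := by
    filter_upwards [hv] with s ⟨hfs, hvs⟩
    rw [(ℓ.hasFDerivAt.comp_hasDerivAt s hfs).deriv]
    calc ℓ (v s) ≤ ‖ℓ (v s)‖ := Real.le_norm_self _
      _ ≤ ‖ℓ‖ * ‖v s‖ := ℓ.le_opNorm _
      _ ≤ 1 * g s := by gcongr
      _ = g s := one_mul _
  calc ‖f b - f a‖ = ∫ s in a..b, deriv (ℓ ∘ f) s := by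
        rw [hac.integral_deriv_eq_sub]; simpa using hℓf.symm
    _ ≤ ∫ s in a..b, g s :=
        intervalIntegral.integral_mono_ae_restrict hab hac.intervalIntegrable_deriv hg hderiv

theorem LipschitzOnWith.norm_le_norm_add_integral_of_norm_deriv_le {E : Type*}
    [NormedAddCommGroup E] [NormedSpace ℝ E] {f v : ℝ → E} {g : ℝ → ℝ} {a b : ℝ} {L : NNReal}
    (hf : LipschitzOnWith L f (Icc a b))
    (hv : ∀ᵐ s ∂volume.restrict (Icc a b), HasDerivAt f (v s) s ∧ ‖v s‖ ≤ g s)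
    (hg : IntervalIntegrable g volume a b) :
    ∀ t ∈ Icc a b, ‖f t‖ ≤ ‖f b‖ + ∫ s in t..b, g s := by
  intro t ht
  have hsub : Icc t b ⊆ Icc a b := Icc_subset_Icc_left ht.1
  calc ‖f t‖ ≤ ‖f b‖ + ‖f b - f t‖ := by rw [norm_sub_rev]; exact norm_le_insert' _ _
    _ ≤ ‖f b‖ + ∫ s in t..b, g s := by
      gcongr
      refine (hf.mono hsub).norm_sub_le_integral_of_norm_deriv_le ht.2
        (ae_restrict_of_ae_restrict_of_subset hsub hv) (hg.mono_set ?_)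
      rw [uIcc_of_le ht.2, uIcc_of_le (ht.1.trans ht.2)]
      exact hsub

/-- `F τ = δ + ∫_{b-τ}^b (K u + ε)` dominates `u (b - τ)` and satisfies `F' ≤ K F + ε`, so the
differential form of Grönwall's inequality applies to it. -/
theorem le_gronwallBound_of_le_integral_of_continuous {u : ℝ → ℝ} {δ K ε a b : ℝ}
    (hK : 0 ≤ K) (hu : Continuous u)
    (h : ∀ t ∈ Icc a b, u t ≤ δ + ∫ s in t..b, (K * u s + ε)) :
    ∀ t ∈ Icc a b, u t ≤ gronwallBound δ K ε (b - t) := by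
  let F : ℝ → ℝ := fun τ => δ + ∫ s in (b - τ)..b, (K * u s + ε)
  have hφ : Continuous fun s => K * u s + ε := by fun_prop
  have hF : ∀ τ, HasDerivAt F (K * u (b - τ) + ε) τ := by
    intro τ
    have := (intervalIntegral.integral_hasDerivAt_left (b := b) (hφ.intervalIntegrable _ _)
      (hφ.stronglyMeasurableAtFilter _ _) hφ.continuousAt).comp τ ((hasDerivAt_id τ).const_sub b)
    simpa [F, Function.comp_def] using this
  have hFbound := le_gronwallBound_of_liminf_deriv_right_le (K := K) (ε := ε) (a := 0) (b := b - a)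
    (fun τ _ => (hF τ).continuousAt.continuousWithinAt)
    (fun τ _ r hr => (hF τ).hasDerivWithinAt.liminf_right_slope_le hr)
    (show F 0 ≤ δ by simp [F])
    (fun τ hτ => by
      have := h (b - τ) ⟨by linarith [hτ.2], by linarith [hτ.1]⟩
      gcongr)
  intro t ht
  have := hFbound (b - t) ⟨by linarith [ht.2], by linarith [ht.1]⟩
  rw [sub_zero] at this
  exact (h t ht).trans (by simpa [F] using this)

theorem le_gronwallBound_of_le_integral {u : ℝ → ℝ} {δ K ε a b : ℝ}
    (hK : 0 ≤ K) (hu : ContinuousOn u (Icc a b))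
    (h : ∀ t ∈ Icc a b, u t ≤ δ + ∫ s in t..b, (K * u s + ε)) :
    ∀ t ∈ Icc a b, u t ≤ gronwallBound δ K ε (b - t) := by
  rcases lt_or_ge b a with hba | hab
  · simp [Icc_eq_empty_of_lt hba]
  have hū : EqOn (IccExtend hab ((Icc a b).domRestrict u)) u (Icc a b) :=
    fun t ht => IccExtend_of_mem hab _ ht
  intro t ht
  rw [← hū ht]
  refine le_gronwallBound_of_le_integral_of_continuous hK
    (continuous_IccExtend_iff.2 hu.domRestrict) (fun t ht => ?_) t ht
  rw [hū ht, intervalIntegral.integral_congr (g := fun s => K * u s + ε)]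
  · exact h t ht
  · intro s hs
    rw [uIcc_of_le ht.2] at hs
    simp [hū ⟨ht.1.trans hs.1, hs.2⟩]

theorem intervalIntegral.integral_expect {ι : Type*} {s : Finset ι} {f : ι → ℝ → ℝ} {a b : ℝ}
    {μ : Measure ℝ} (hf : ∀ i ∈ s, IntervalIntegrable (f i) μ a b) :
    ∫ x in a..b, 𝔼 i ∈ s, f i x ∂μ = 𝔼 i ∈ s, ∫ x in a..b, f i x ∂μ := by
  simp_rw [Finset.expect_eq_sum_div_card, intervalIntegral.integral_div,
    intervalIntegral.integral_finsetSum hf]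

theorem norm_le_of_norm_deriv_le_add_expect {ι E : Type*} [Fintype ι] [NormedAddCommGroup E]
    [NormedSpace ℝ E] {r v : ι → ℝ → E} {C C_g T : ℝ} (hC : 0 ≤ C)
    (hr : ∀ i, ∃ L, LipschitzOnWith L (r i) (Icc 0 T))
    (hv : ∀ i, ∀ᵐ s ∂volume.restrict (Icc 0 T),
      HasDerivAt (r i) (v i s) s ∧ ‖v i s‖ ≤ C * ‖r i s‖ + C * 𝔼 j, ‖r j s‖ + C)
    (hrT : ∀ i, ‖r i T‖ ≤ C_g) (i : ι) :
    ∀ t ∈ Icc 0 T, ‖r i t‖ ≤ gronwallBound C_g C (C * gronwallBound C_g (2 * C) C T + C) T := by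
  have : Nonempty ι := ⟨i⟩
  have hCg : 0 ≤ C_g := (norm_nonneg _).trans (hrT i)
  have hrc : ∀ j, ContinuousOn (fun s => ‖r j s‖) (Icc 0 T) :=
    fun j => (hr j).choose_spec.continuousOn.norm
  set u : ℝ → ℝ := fun s => 𝔼 j, ‖r j s‖ with hu_def
  have huc : ContinuousOn u (Icc 0 T) := by
    simp_rw [hu_def, Finset.expect_eq_sum_div_card]
    exact (continuousOn_finsetSum _ fun j _ => hrc j).div_const _
  have hφ : ∀ j, ∀ t ∈ Icc 0 T,
      IntervalIntegrable (fun s => C * ‖r j s‖ + C * u s + C) volume t T := fun j t ht =>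
    (((hrc j).const_mul C).add (huc.const_mul C) |>.add continuousOn_const
      |>.mono (Icc_subset_Icc_left ht.1)).intervalIntegrable_of_Icc ht.2
  have hint : ∀ j, ∀ t ∈ Icc 0 T,
      ‖r j t‖ ≤ C_g + ∫ s in t..T, (C * ‖r j s‖ + C * u s + C) := by
    intro j t ht
    obtain ⟨L, hL⟩ := hr j
    exact (hL.norm_le_norm_add_integral_of_norm_deriv_le (hv j)
      (hφ j 0 ⟨le_rfl, ht.1.trans ht.2⟩) t ht).trans (by gcongr; exact hrT j)
  have hmean : ∀ t ∈ Icc 0 T, u t ≤ C_g + ∫ s in t..T, (2 * C * u s + C) := by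
    intro t ht
    calc u t ≤ 𝔼 j, (C_g + ∫ s in t..T, (C * ‖r j s‖ + C * u s + C)) :=
          Finset.expect_le_expect fun j _ => hint j t ht
      _ = C_g + ∫ s in t..T, 𝔼 j, (C * ‖r j s‖ + C * u s + C) := by
          rw [Finset.expect_add_distrib, Finset.expect_const Finset.univ_nonempty,
            intervalIntegral.integral_expect fun j _ => hφ j t ht]
      _ = C_g + ∫ s in t..T, (2 * C * u s + C) := by
          congr 2 with s
          simp only [Finset.expect_add_distrib, ← Finset.mul_expect,
            Finset.expect_const Finset.univ_nonempty]
          ring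
  set U := gronwallBound C_g (2 * C) C T
  have hU : ∀ s ∈ Icc 0 T, u s ≤ U := fun s hs =>
    (le_gronwallBound_of_le_integral (by positivity) huc hmean s hs).trans
      (gronwallBound_mono hCg hC (by positivity) (by linarith [hs.1]))
  have hi : ∀ t ∈ Icc 0 T, ‖r i t‖ ≤ C_g + ∫ s in t..T, (C * ‖r i s‖ + (C * U + C)) := by
    intro t ht
    refine (hint i t ht).trans (add_le_add_right (intervalIntegral.integral_mono_on ht.2
      (hφ i t ht) ?_ fun s hs => ?_) _)
    · exact (((hrc i).const_mul C).add continuousOn_const |>.mono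
        (Icc_subset_Icc_left ht.1)).intervalIntegrable_of_Icc ht.2
    · have := hU s ⟨ht.1.trans hs.1, hs.2⟩
      linarith [mul_le_mul_of_nonneg_left this hC]
  intro t ht
  have hUnn : 0 ≤ U :=
    calc 0 ≤ C_g := hCg
      _ = gronwallBound C_g (2 * C) C 0 := (gronwallBound_x0 _ _ _).symm
      _ ≤ U := gronwallBound_mono hCg hC (by positivity) (ht.1.trans ht.2)
  exact (le_gronwallBound_of_le_integral hC (hrc i) hi t ht).trans
    (gronwallBound_mono hCg (by positivity) hC (by linarith [ht.1]))

theorem norm_neg_adjoint_sub_average_adjoint_add_le {ι E : Type*} [Fintype ι]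
    [NormedAddCommGroup E] [InnerProductSpace ℝ E] [CompleteSpace E]
    {A : E →L[ℝ] E} {B : ι → E →L[ℝ] E} {x c : E} {y : ι → E} {C : ℝ}
    (hA : ‖A‖ ≤ C) (hB : ∀ j, ‖B j‖ ≤ C) (hc : ‖c‖ ≤ C) :
    ‖-(ContinuousLinearMap.adjoint A) x
        - (1 / (Fintype.card ι : ℝ)) • ∑ j, (ContinuousLinearMap.adjoint (B j)) (y j) + c‖
      ≤ C * ‖x‖ + C * 𝔼 j, ‖y j‖ + C := by
  have hadj : ∀ (M : E →L[ℝ] E) (z : E), ‖M‖ ≤ C → ‖ContinuousLinearMap.adjoint M z‖ ≤ C * ‖z‖ :=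
    fun M z hM => (ContinuousLinearMap.le_opNorm _ z).trans <| by
      rw [LinearIsometryEquiv.norm_map]; gcongr
  have hmean : ‖(1 / (Fintype.card ι : ℝ)) • ∑ j, ContinuousLinearMap.adjoint (B j) (y j)‖
      ≤ C * 𝔼 j, ‖y j‖ := by
    rw [norm_smul, Real.norm_of_nonneg (by positivity), Finset.mul_expect,
      Finset.expect_eq_sum_div_card, one_div_mul_eq_div, Finset.card_univ]
    gcongr
    exact (norm_sum_le _ _).trans (Finset.sum_le_sum fun j _ => hadj _ _ (hB j))
  calc _ ≤ ‖ContinuousLinearMap.adjoint A x‖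
        + ‖(1 / (Fintype.card ι : ℝ)) • ∑ j, ContinuousLinearMap.adjoint (B j) (y j)‖ + ‖c‖ :=
        (norm_add_le _ _).trans (by gcongr; exact (norm_sub_le _ _).trans_eq (by rw [norm_neg]))
    _ ≤ C * ‖x‖ + C * 𝔼 j, ‖y j‖ + C := by gcongr; exact hadj _ _ hA

theorem stmt_4_general (C C_g T : ℝ) (hC : 0 ≤ C) :
    ∃ R : ℝ, 0 < R ∧
      ∀ (d N : ℕ), 1 ≤ N →
        ∀ (r : Fin N → ℝ → EuclideanSpace ℝ (Fin d))
          (A : Fin N → ℝ → EuclideanSpace ℝ (Fin d) →L[ℝ] EuclideanSpace ℝ (Fin d))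
          (B : Fin N → Fin N → ℝ → EuclideanSpace ℝ (Fin d) →L[ℝ] EuclideanSpace ℝ (Fin d))
          (c : Fin N → ℝ → EuclideanSpace ℝ (Fin d)),
          (∀ i, ∃ L : NNReal, LipschitzOnWith L (r i) (Icc (0:ℝ) T)) →
          (∀ i, ∀ᵐ t ∂(volume.restrict (Icc (0:ℝ) T)),
            HasDerivAt (r i)
              (-(ContinuousLinearMap.adjoint (A i t)) (r i t)
                - (1 / (N:ℝ)) • ∑ j, (ContinuousLinearMap.adjoint (B i j t)) (r j t)
                + c i t) t
            ∧ ‖A i t‖ ≤ C ∧ (∀ j, ‖B i j t‖ ≤ C) ∧ ‖c i t‖ ≤ C) →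
          (∀ i, ‖r i T‖ ≤ C_g) →
          ∀ i, ∀ t ∈ Icc (0:ℝ) T, ‖r i t‖ ≤ R := by
  refine ⟨max (gronwallBound C_g C (C * gronwallBound C_g (2 * C) C T + C) T) 1,
    lt_max_of_lt_right one_pos, ?_⟩
  intro d N _ r A B c hLip hODE hTerm i t ht
  refine le_max_of_le_left (norm_le_of_norm_deriv_le_add_expect hC hLip (fun i => ?_) hTerm i t ht
    (v := fun i s => -(ContinuousLinearMap.adjoint (A i s)) (r i s)
      - (1 / (N:ℝ)) • ∑ j, (ContinuousLinearMap.adjoint (B i j s)) (r j s) + c i s))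
  filter_upwards [hODE i] with s ⟨hderiv, hA, hB, hc⟩
  refine ⟨hderiv, ?_⟩
  simpa using
    norm_neg_adjoint_sub_average_adjoint_add_le (x := r i s) (y := fun j => r j s) hA hB hc

/-- Uniform-in-`N` bound on the rescaled costates of the mean-field Pontryagin Maximum
Principle: solutions of the backward adjoint system coupled only through averages, with
uniformly bounded coefficients, source terms and terminal data, are uniformly bounded by a
constant depending only on `C, C_g, T`. -/
theorem stmt_4 (C C_g T : ℝ) (hC : 0 ≤ C) (hCg : 0 ≤ C_g) (hT : 0 < T) :
    ∃ R : ℝ, 0 < R ∧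
      ∀ (d N : ℕ), 1 ≤ N →
        ∀ (r : Fin N → ℝ → EuclideanSpace ℝ (Fin d))
          (A : Fin N → ℝ → EuclideanSpace ℝ (Fin d) →L[ℝ] EuclideanSpace ℝ (Fin d))
          (B : Fin N → Fin N → ℝ → EuclideanSpace ℝ (Fin d) →L[ℝ] EuclideanSpace ℝ (Fin d))
          (c : Fin N → ℝ → EuclideanSpace ℝ (Fin d)),
          (∀ i, ∃ L : NNReal, LipschitzOnWith L (r i) (Icc (0:ℝ) T)) →
          (∀ i, ∀ᵐ t ∂(volume.restrict (Icc (0:ℝ) T)),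
            HasDerivAt (r i)
              (-(ContinuousLinearMap.adjoint (A i t)) (r i t)
                - (1 / (N:ℝ)) • ∑ j, (ContinuousLinearMap.adjoint (B i j t)) (r j t)
                + c i t) t
            ∧ ‖A i t‖ ≤ C ∧ (∀ j, ‖B i j t‖ ≤ C) ∧ ‖c i t‖ ≤ C) →
          (∀ i, ‖r i T‖ ≤ C_g) →
          ∀ i, ∀ t ∈ Icc (0:ℝ) T, ‖r i t‖ ≤ R :=
  stmt_4_general C C_g T hC
end

section
/- Let T > 0, λ > 0, an integer N ≥ 2, and ρ ∈ ℝ. For w ∈ L²([0,T], ℝ^N) write y_i := ∫₀ᵀ w_i(t) dt and ȳ := (1/N) ∑_{i=1}^N y_i. Then the following are equivalent: (i) for every w ∈ L²([0,T], ℝ^N), λ ∫₀ᵀ (1/N) ∑_{i=1}^N w_i(t)² dt − ( (1/N) ∑_{i=1}^N y_i² − ȳ² ) ≥ ρ ∫₀ᵀ (1/N) ∑_{i=1}^N w_i(t)² dt; (ii) ρ ≤ λ − T. In particular, this coercivity estimate holds with some constant ρ > 0 if and only if λ > T, and the sharp (largest) coercivity constant equals λ − T, equality in (i) with ρ = λ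 − T being attained by any nonzero constant-in-time w with ∑_{i=1}^N w_i = 0. -/
/-! By Jensen's inequality for the square on `[0, T]` (i.e. Cauchy–Schwarz), each component of the
linearised state `y = ∫₀ᵀ w` satisfies `y_i² ≤ T ∫₀ᵀ w_i²`; since the empirical variance is at most
the mean of the `y_i²`, the second variation is at least `(λ - T) ‖w‖²`. For a constant-in-time `w`
with zero mean the mean of `y` vanishes and Cauchy–Schwarz is an equality, so the bound is attained;
such a nonzero `w` exists as soon as `N ≥ 2`. -/

open MeasureTheory Set

theorem sq_intervalIntegral_le_mul {f : ℝ → ℝ} {a b : ℝ} (hab : a ≤ b)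
    (hf : IntervalIntegrable f volume a b)
    (hf2 : IntervalIntegrable (fun t => f t ^ 2) volume a b) :
    (∫ t in a..b, f t) ^ 2 ≤ (b - a) * ∫ t in a..b, f t ^ 2 := by
  rcases hab.eq_or_lt with rfl | hab
  · simp
  have hvol : volume (uIoc a b) ≠ 0 := by simp [uIoc_of_le hab.le, hab]
  have jensen := even_two.convexOn_pow.map_set_average_le (continuous_pow 2).continuousOn
    isClosed_univ hvol (by simp [uIoc_of_le hab.le]) (Filter.Eventually.of_forall fun _ => mem_univ _)
    hf.def' hf2.def'
  rw [interval_average_eq, interval_average_eq, smul_eq_mul, smul_eq_mul] at jensen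
  have hba : b - a ≠ 0 := sub_ne_zero.2 hab.ne'
  calc (∫ t in a..b, f t) ^ 2 = (b - a) ^ 2 * ((b - a)⁻¹ * ∫ t in a..b, f t) ^ 2 := by
        field_simp
    _ ≤ (b - a) ^ 2 * ((b - a)⁻¹ * ∫ t in a..b, f t ^ 2) := by gcongr
    _ = (b - a) * ∫ t in a..b, f t ^ 2 := by field_simp

theorem MeasureTheory.MemLp.intervalIntegrable {f : ℝ → ℝ} {a b : ℝ} (hab : a ≤ b)
    (hf : MemLp f 2 (volume.restrict (Icc a b))) : IntervalIntegrable f volume a b :=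
  (intervalIntegrable_iff_integrableOn_Icc_of_le hab).2 (hf.integrable one_le_two)

theorem MeasureTheory.MemLp.intervalIntegrable_sq {f : ℝ → ℝ} {a b : ℝ} (hab : a ≤ b)
    (hf : MemLp f 2 (volume.restrict (Icc a b))) :
    IntervalIntegrable (fun t => f t ^ 2) volume a b :=
  (intervalIntegrable_iff_integrableOn_Icc_of_le hab).2 hf.integrable_sq

theorem Fintype.exists_ne_zero_sum_eq_zero {ι R : Type*} [Fintype ι] [Ring R] [Nontrivial R]
    (h : 1 < Fintype.card ι) : ∃ c : ι → R, c ≠ 0 ∧ ∑ i, c i = 0 := by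
  classical
  obtain ⟨i, j, hij⟩ := Fintype.exists_pair_of_one_lt_card h
  refine ⟨Pi.single i 1 - Pi.single j 1, fun h0 => ?_, ?_⟩
  · simpa [hij] using congrFun h0 i
  · simp

variable {N : ℕ}

noncomputable def empiricalVariance (y : Fin N → ℝ) : ℝ :=
  (1 / (N:ℝ)) * ∑ i, y i ^ 2 - ((1 / (N:ℝ)) * ∑ i, y i) ^ 2

noncomputable def meanFieldSqNorm (T : ℝ) (w : Fin N → ℝ → ℝ) : ℝ :=
  ∫ t in (0:ℝ)..T, (1 / (N:ℝ)) * ∑ i, w i t ^ 2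

noncomputable def secondVariation (lam T : ℝ) (w : Fin N → ℝ → ℝ) : ℝ :=
  lam * meanFieldSqNorm T w - empiricalVariance fun i => ∫ t in (0:ℝ)..T, w i t

section

variable {T : ℝ} {w : Fin N → ℝ → ℝ}

theorem empiricalVariance_le (y : Fin N → ℝ) : empiricalVariance y ≤ (1 / (N:ℝ)) * ∑ i, y i ^ 2 :=
  sub_le_self _ (sq_nonneg _)

theorem meanFieldSqNorm_nonneg (hT : 0 ≤ T) : 0 ≤ meanFieldSqNorm T w :=
  intervalIntegral.integral_nonneg hT fun _ _ => by positivity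

theorem meanFieldSqNorm_eq (hT : 0 ≤ T) (hw : ∀ i, MemLp (w i) 2 (volume.restrict (Icc 0 T))) :
    meanFieldSqNorm T w = (1 / (N:ℝ)) * ∑ i, ∫ t in (0:ℝ)..T, w i t ^ 2 := by
  rw [meanFieldSqNorm, intervalIntegral.integral_const_mul,
    intervalIntegral.integral_finsetSum fun i _ => (hw i).intervalIntegrable_sq hT]

theorem empiricalVariance_integral_le (hT : 0 ≤ T)
    (hw : ∀ i, MemLp (w i) 2 (volume.restrict (Icc 0 T))) :
    (empiricalVariance fun i => ∫ t in (0:ℝ)..T, w i t) ≤ T * meanFieldSqNorm T w :=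
  calc (empiricalVariance fun i => ∫ t in (0:ℝ)..T, w i t)
      ≤ (1 / (N:ℝ)) * ∑ i, (∫ t in (0:ℝ)..T, w i t) ^ 2 := empiricalVariance_le _
    _ ≤ (1 / (N:ℝ)) * ∑ i, T * ∫ t in (0:ℝ)..T, w i t ^ 2 := by
      gcongr with i
      simpa using sq_intervalIntegral_le_mul hT ((hw i).intervalIntegrable hT)
        ((hw i).intervalIntegrable_sq hT)
    _ = T * meanFieldSqNorm T w := by
      rw [meanFieldSqNorm_eq hT hw, ← Finset.mul_sum]
      ring

theorem le_secondVariation_of_le {lam ρ : ℝ} (hT : 0 ≤ T) (hρ : ρ ≤ lam - T)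
    (hw : ∀ i, MemLp (w i) 2 (volume.restrict (Icc 0 T))) :
    ρ * meanFieldSqNorm T w ≤ secondVariation lam T w := by
  have hvar := empiricalVariance_integral_le hT hw
  have hρw := mul_le_mul_of_nonneg_right hρ (meanFieldSqNorm_nonneg (w := w) hT)
  rw [secondVariation]
  linarith

end

section

variable (T : ℝ) {c : Fin N → ℝ}

theorem meanFieldSqNorm_const :
    meanFieldSqNorm T (fun i _ => c i) = T * ((1 / (N:ℝ)) * ∑ i, c i ^ 2) := by
  rw [meanFieldSqNorm, intervalIntegral.integral_const, smul_eq_mul, sub_zero]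

theorem meanFieldSqNorm_const_pos (hT : 0 < T) (hc : c ≠ 0) :
    0 < meanFieldSqNorm T (fun i _ => c i) := by
  obtain ⟨i, hi⟩ := Function.ne_iff.1 hc
  have hN : (0:ℝ) < N := by exact_mod_cast i.pos
  have hsum : 0 < ∑ i, c i ^ 2 :=
    Finset.sum_pos' (fun _ _ => sq_nonneg _) ⟨i, Finset.mem_univ _, pow_two_pos_of_ne_zero hi⟩
  rw [meanFieldSqNorm_const]
  positivity

theorem empiricalVariance_integral_const (hc : ∑ i, c i = 0) :
    (empiricalVariance fun i => ∫ _ in (0:ℝ)..T, c i) = T ^ 2 * ((1 / (N:ℝ)) * ∑ i, c i ^ 2) := by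
  simp only [empiricalVariance, intervalIntegral.integral_const, smul_eq_mul, sub_zero, mul_pow,
    ← Finset.mul_sum, hc]
  ring

theorem secondVariation_const (lam : ℝ) (hc : ∑ i, c i = 0) :
    secondVariation lam T (fun i _ => c i) = (lam - T) * meanFieldSqNorm T (fun i _ => c i) := by
  rw [secondVariation, empiricalVariance_integral_const T hc, meanFieldSqNorm_const]
  ring

end

theorem stmt_10_general (T lam ρ : ℝ) (hT : 0 < T) (N : ℕ) (hN : 2 ≤ N) :
    ((∀ w : Fin N → ℝ → ℝ,
        (∀ i, MemLp (w i) 2 (volume.restrict (Icc (0:ℝ) T))) →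
        lam * (∫ t in (0:ℝ)..T, (1 / (N:ℝ)) * ∑ i, (w i t) ^ 2)
            - ((1 / (N:ℝ)) * ∑ i, (∫ t in (0:ℝ)..T, w i t) ^ 2
              - ((1 / (N:ℝ)) * ∑ i, ∫ t in (0:ℝ)..T, w i t) ^ 2)
          ≥ ρ * ∫ t in (0:ℝ)..T, (1 / (N:ℝ)) * ∑ i, (w i t) ^ 2)
      ↔ ρ ≤ lam - T)
    ∧
    (∀ c : Fin N → ℝ, (∑ i, c i = 0) →
      lam * (∫ t in (0:ℝ)..T, (1 / (N:ℝ)) * ∑ i, (c i) ^ 2)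
          - ((1 / (N:ℝ)) * ∑ i, (∫ t in (0:ℝ)..T, c i) ^ 2
            - ((1 / (N:ℝ)) * ∑ i, ∫ t in (0:ℝ)..T, c i) ^ 2)
        = (lam - T) * ∫ t in (0:ℝ)..T, (1 / (N:ℝ)) * ∑ i, (c i) ^ 2) := by
  refine ⟨⟨fun h => ?_, fun hρ w hw => le_secondVariation_of_le hT.le hρ hw⟩,
    fun c hc => secondVariation_const T lam hc⟩
  obtain ⟨c, hc0, hc⟩ :=
    Fintype.exists_ne_zero_sum_eq_zero (ι := Fin N) (R := ℝ) (by rw [Fintype.card_fin]; omega)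
  have hcoer : ρ * meanFieldSqNorm T (fun i _ => c i) ≤ secondVariation lam T (fun i _ => c i) :=
    h _ fun i => memLp_const (c i)
  rw [secondVariation_const T lam hc] at hcoer
  exact le_of_mul_le_mul_right hcoer (meanFieldSqNorm_const_pos T hT hc0)

/-- Characterisation of the mean-field coercivity condition for the variance-maximisation
problem: the coercivity estimate with constant `ρ` holds for every `L²` control
perturbation `w` if and only if `ρ ≤ λ − T`; moreover equality is attained with
`ρ = λ − T` by any constant-in-time perturbation with zero mean. -/
theorem stmt_10 (T lam ρ : ℝ) (hT : 0 < T) (hlam : 0 < lam) (N : ℕ) (hN : 2 ≤ N) :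
    ((∀ w : Fin N → ℝ → ℝ,
        (∀ i, MemLp (w i) 2 (volume.restrict (Icc (0:ℝ) T))) →
        lam * (∫ t in (0:ℝ)..T, (1 / (N:ℝ)) * ∑ i, (w i t) ^ 2)
            - ((1 / (N:ℝ)) * ∑ i, (∫ t in (0:ℝ)..T, w i t) ^ 2
              - ((1 / (N:ℝ)) * ∑ i, ∫ t in (0:ℝ)..T, w i t) ^ 2)
          ≥ ρ * ∫ t in (0:ℝ)..T, (1 / (N:ℝ)) * ∑ i, (w i t) ^ 2)
      ↔ ρ ≤ lam - T)
    ∧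
    (∀ c : Fin N → ℝ, (∑ i, c i = 0) →
      lam * (∫ t in (0:ℝ)..T, (1 / (N:ℝ)) * ∑ i, (c i) ^ 2)
          - ((1 / (N:ℝ)) * ∑ i, (∫ t in (0:ℝ)..T, c i) ^ 2
            - ((1 / (N:ℝ)) * ∑ i, ∫ t in (0:ℝ)..T, c i) ^ 2)
        = (lam - T) * ∫ t in (0:ℝ)..T, (1 / (N:ℝ)) * ∑ i, (c i) ^ 2) :=
  stmt_10_general T lam ρ hT N hN
end

section
/- Assume λ > T, and for a ∈ ℝ let u(a) := max(−C, min(C, a/(λ − T))) be the unique minimiser over [−C, C] of J_a; let x_a(t) := a + t·u(a) denote the corresponding trajectory. Then for all a, b ∈ ℝ and all t ∈ [0, T], |u(a) − u(b)| ≤ (1/(λ − T)) |x_a(t) − x_b(t)|. That is, the optimal controls are Lipschitz in space along the optimal trajectories, with constant 1/ρ_T where ρ_T := λ − T is the sharp mean-field coercivity constant of the problem. -/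
open Set

lemma proj_lip (p q x y : ℝ) :
    |max p (min q x) - max p (min q y)| ≤ |x - y| := by
  calc |max p (min q x) - max p (min q y)|
      = |max (min q x) p - max (min q y) p| := by rw [max_comm p, max_comm p]
    _ ≤ |min q x - min q y| := abs_max_sub_max_le_abs _ _ _
    _ ≤ max |q - q| |x - y| := abs_min_sub_min_le_max _ _ _ _
    _ ≤ |x - y| := by simp

lemma key (ρ C a b t : ℝ) (hρ : 0 < ρ) (ht : 0 ≤ t) (hab : b ≤ a) :
    |max (-C) (min C (a / ρ)) - max (-C) (min C (b / ρ))|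
      ≤ 1 / ρ * |(a + t * max (-C) (min C (a / ρ))) - (b + t * max (-C) (min C (b / ρ)))| := by
  set ua := max (-C) (min C (a / ρ)) with hua
  set ub := max (-C) (min C (b / ρ)) with hub
  have hmono : ub ≤ ua := by
    apply max_le_max le_rfl
    apply min_le_min le_rfl
    gcongr
  have hlip : ua - ub ≤ (a - b) / ρ := by
    have h := proj_lip (-C) C (a / ρ) (b / ρ)
    rw [← sub_div] at h
    calc ua - ub ≤ |ua - ub| := le_abs_self _
      _ ≤ |(a - b) / ρ| := h
      _ = (a - b) / ρ := abs_of_nonneg (div_nonneg (by linarith) hρ.le)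
  have h1 : |ua - ub| = ua - ub := abs_of_nonneg (by linarith)
  have h2 : (a + t * ua) - (b + t * ub) = (a - b) + t * (ua - ub) := by ring
  have h3 : |(a + t * ua) - (b + t * ub)| = (a - b) + t * (ua - ub) := by
    rw [h2]; exact abs_of_nonneg (by nlinarith)
  rw [h1, h3]
  have h4 : (ua - ub) * ρ ≤ a - b := (le_div_iff₀ hρ).mp hlip
  have h5 : 0 ≤ t * (ua - ub) := mul_nonneg ht (by linarith)
  rw [one_div, ← div_eq_inv_mul, le_div_iff₀ hρ]
  nlinarith

/-- When `λ > T`, the optimal feedback `u(a) = proj_{[−C,C]}(a/(λ−T))` of the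
variance-maximisation problem is Lipschitz in space along the optimal trajectories
`x_a(t) = a + t·u(a)`, with constant `1/(λ−T)`. -/
theorem stmt_14 (T C lam : ℝ) (hT : 0 < T) (hC : 0 < C) (hlam : T < lam) :
    ∀ a b : ℝ, ∀ t ∈ Icc (0:ℝ) T,
      |max (-C) (min C (a / (lam - T))) - max (-C) (min C (b / (lam - T)))|
        ≤ 1 / (lam - T) *
          |(a + t * max (-C) (min C (a / (lam - T))))
            - (b + t * max (-C) (min C (b / (lam - T))))| := by
  intro a b t ht
  have hρ : 0 < lam - T := by linarith
  rcases le_total b a with hab | hab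
  · exact key _ _ _ _ _ hρ ht.1 hab
  · have := key (lam - T) C b a t hρ ht.1 hab
    rw [abs_sub_comm, abs_sub_comm (b + _)] at this
    exact this
end

section
/- Let ρ > 0, C > 0 and t ≥ 0, and for a ∈ ℝ set u(a) := max(−C, min(C, a/ρ)) (the projection of a/ρ onto [−C, C]). Then for all a, b ∈ ℝ, |u(a) − u(b)| ≤ (1/ρ) | (a + t·u(a)) − (b + t·u(b)) |. -/
/-- The clamped linear feedback `u(a) = proj_{[−C,C]}(a/ρ)` satisfies, for every `t ≥ 0`,
the estimate `|u(a) − u(b)| ≤ (1/ρ)|(a + t·u(a)) − (b + t·u(b))|`. -/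
theorem stmt_15 (ρ C t : ℝ) (hρ : 0 < ρ) (hC : 0 < C) (ht : 0 ≤ t) :
    ∀ a b : ℝ,
      |max (-C) (min C (a / ρ)) - max (-C) (min C (b / ρ))|
        ≤ 1 / ρ * |(a + t * max (-C) (min C (a / ρ))) - (b + t * max (-C) (min C (b / ρ)))| := by
  have key : ∀ a b : ℝ, b ≤ a →
      |max (-C) (min C (a / ρ)) - max (-C) (min C (b / ρ))|
        ≤ 1 / ρ * |(a + t * max (-C) (min C (a / ρ))) - (b + t * max (-C) (min C (b / ρ)))| := by
    intro a b hab
    set ua := max (-C) (min C (a / ρ)) with hua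
    set ub := max (-C) (min C (b / ρ)) with hub
    have hdiv : b / ρ ≤ a / ρ := by gcongr
    have hmono : ub ≤ ua := max_le_max le_rfl (min_le_min le_rfl hdiv)
    have labs : |ua - ub| ≤ |a / ρ - b / ρ| := by
      calc |ua - ub| ≤ max |(-C) - (-C)| |min C (a / ρ) - min C (b / ρ)| :=
            abs_max_sub_max_le_max _ _ _ _
        _ ≤ |min C (a / ρ) - min C (b / ρ)| := by simp
        _ ≤ max |C - C| |a / ρ - b / ρ| := abs_min_sub_min_le_max _ _ _ _
        _ ≤ |a / ρ - b / ρ| := by simp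
    have hlip : ua - ub ≤ a / ρ - b / ρ := by
      have := (abs_le.mp labs).2
      rwa [abs_of_nonneg (by linarith : (0:ℝ) ≤ a / ρ - b / ρ)] at this
    have ea : ρ * (a / ρ) = a := mul_div_cancel₀ a hρ.ne'
    have eb : ρ * (b / ρ) = b := mul_div_cancel₀ b hρ.ne'
    have h1 : ρ * (ua - ub) ≤ a - b := by
      have := mul_le_mul_of_nonneg_left hlip hρ.le
      rw [mul_sub, mul_sub, ea, eb] at this
      linarith
    have hu : 0 ≤ ua - ub := by linarith
    have h2 : 0 ≤ (a + t * ua) - (b + t * ub) := by nlinarith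
    rw [abs_of_nonneg hu, abs_of_nonneg h2]
    have hr : 1 / ρ * ρ = 1 := one_div_mul_cancel hρ.ne'
    have hinv : (0:ℝ) ≤ 1 / ρ := by positivity
    nlinarith [mul_le_mul_of_nonneg_left h1 hinv]
  intro a b
  rcases le_total b a with h | h
  · exact key a b h
  · have := key b a h
    rwa [abs_sub_comm, abs_sub_comm (b + _)] at this
end

section
/- Assume 0 < λ ≤ T. Then for every L > 0 there exist a, b ∈ [−1, 1] with a ≠ b such that any minimisers u_a, u_b ∈ [−C, C] of J_a and J_b over [−C, C], respectively, satisfy |u_a − u_b| > L |a − b|. Consequently, when the coercivity condition λ > T fails, the optimal controls of the discretised variance-maximisation problems admit no uniform Lipschitz-in-space bound on any set of initial data accumulating at the origin from both sides. -/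
open Set

lemma min_forces_C (T C lam a : ℝ) (hT : 0 < T) (hC : 0 < C)
    (hlamT : lam ≤ T) (ha : 0 < a) (u : ℝ) (hu : u ∈ Icc (-C) C)
    (hmin : ∀ c ∈ Icc (-C) C,
      lam * T / 2 * u ^ 2 - 1 / 2 * (a + T * u) ^ 2
        ≤ lam * T / 2 * c ^ 2 - 1 / 2 * (a + T * c) ^ 2) : u = C := by
  have h := hmin C ⟨by linarith, le_refl C⟩
  by_contra hne
  have hlt : u < C := lt_of_le_of_ne hu.2 hne
  have h1 : 0 < C - u := by linarith
  have h2 : 0 < a * T + T / 2 * (T - lam) * (u + C) := by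
    have : 0 ≤ T / 2 * (T - lam) * (u + C) := by
      apply mul_nonneg
      · apply mul_nonneg <;> linarith
      · have := hu.1; linarith
    nlinarith
  nlinarith [mul_pos h1 h2]

lemma min_forces_negC (T C lam b : ℝ) (hT : 0 < T) (hC : 0 < C)
    (hlamT : lam ≤ T) (hb : b < 0) (u : ℝ) (hu : u ∈ Icc (-C) C)
    (hmin : ∀ c ∈ Icc (-C) C,
      lam * T / 2 * u ^ 2 - 1 / 2 * (b + T * u) ^ 2
        ≤ lam * T / 2 * c ^ 2 - 1 / 2 * (b + T * c) ^ 2) : u = -C := by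
  have h := hmin (-C) ⟨le_refl _, by linarith⟩
  by_contra hne
  have hlt : -C < u := lt_of_le_of_ne hu.1 (Ne.symm hne)
  have h1 : 0 < u + C := by linarith
  have h2 : 0 < (-b) * T + T / 2 * (T - lam) * (C - u) := by
    have : 0 ≤ T / 2 * (T - lam) * (C - u) := by
      apply mul_nonneg
      · apply mul_nonneg <;> linarith
      · have := hu.2; linarith
    nlinarith
  nlinarith [mul_pos h1 h2]

/-- When the coercivity condition fails (`0 < λ ≤ T`), the optimal controls of the
discretised variance-maximisation problem admit no uniform Lipschitz-in-space bound:
for every `L > 0` there are distinct initial positions `a, b ∈ [−1,1]` such that any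
minimisers `u_a, u_b` of the reduced costs `J_a, J_b` over `[−C,C]` satisfy
`|u_a − u_b| > L|a − b|`. -/
theorem stmt_16 (T C lam : ℝ) (hT : 0 < T) (hC : 0 < C)
    (hlam : 0 < lam) (hlamT : lam ≤ T) :
    ∀ L > 0, ∃ a ∈ Icc (-1:ℝ) 1, ∃ b ∈ Icc (-1:ℝ) 1, a ≠ b ∧
      ∀ ua ∈ Icc (-C) C, ∀ ub ∈ Icc (-C) C,
        (∀ c ∈ Icc (-C) C,
          lam * T / 2 * ua ^ 2 - 1 / 2 * (a + T * ua) ^ 2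
            ≤ lam * T / 2 * c ^ 2 - 1 / 2 * (a + T * c) ^ 2) →
        (∀ c ∈ Icc (-C) C,
          lam * T / 2 * ub ^ 2 - 1 / 2 * (b + T * ub) ^ 2
            ≤ lam * T / 2 * c ^ 2 - 1 / 2 * (b + T * c) ^ 2) →
        L * |a - b| < |ua - ub| := by
  intro L hL
  set ε : ℝ := min 1 (C / (2 * L)) with hε
  have hε0 : 0 < ε := lt_min one_pos (by positivity)
  have hε1 : ε ≤ 1 := min_le_left _ _
  refine ⟨ε, ⟨by linarith, hε1⟩, -ε, ⟨by linarith, by linarith⟩, by intro h; nlinarith, ?_⟩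
  intro ua hua ub hub hma hmb
  have h1 : ua = C := min_forces_C T C lam ε hT hC hlamT hε0 ua hua hma
  have h2 : ub = -C := min_forces_negC T C lam (-ε) hT hC hlamT (by linarith) ub hub hmb
  have hεC : L * ε ≤ C / 2 := by
    have : ε ≤ C / (2 * L) := min_le_right _ _
    rw [le_div_iff₀ (by positivity)] at this
    nlinarith
  rw [h1, h2]
  rw [abs_of_pos (show (0:ℝ) < ε - -ε by linarith), abs_of_pos (show (0:ℝ) < C - -C by linarith)]
  nlinarith
end
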